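/- Let Λ be an abelian group, C ⊆ Λ∖{0} a positive cone, and (τ,T,≤), (τ̃,T̃,≤) weak stability conditions on C such that (τ̃,T̃,≤) dominates (τ,T,≤). Then for all n ≥ 1 and α_1,…,α_n ∈ C: unless τ̃(α_1) = τ̃(α_2) = ⋯ = τ̃(α_n), both U(α_1,…,α_n;τ,τ̃) = 0 and U(α_1,…,α_n;τ̃,τ) = 0. -/

import Mathlib

/-- `(τ, T, ≤)` is a weak stability condition on the positive cone `C ⊆ Λ∖{0}`:
for all `α, γ ∈ C` (and `β = α + γ`), either `τ(α) ≤ τ(β) ≤ τ(γ)` or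
`τ(α) ≥ τ(β) ≥ τ(γ)`. -/
def WeakStability {Λ T : Type*} [AddCommMonoid Λ] [LinearOrder T]
    (C : Set Λ) (τ : Λ → T) : Prop :=
  ∀ a ∈ C, ∀ g ∈ C,
    (τ a ≤ τ (a + g) ∧ τ (a + g) ≤ τ g) ∨ (τ g ≤ τ (a + g) ∧ τ (a + g) ≤ τ a)

open scoped Classical in
/-- The wall-crossing coefficient `S(α₁,…,αₙ; τ, τ̃)` of Joyce, for the tuple
`α 0, …, α (n-1)`.  It is `(−1)^r` if for every cut `i = 1,…,n−1` either
(a) `τ(αᵢ) ≤ τ(α_{i+1})` and `τ̃(α₁+⋯+αᵢ) > τ̃(α_{i+1}+⋯+αₙ)`, or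
(b) `τ(αᵢ) > τ(α_{i+1})` and `τ̃(α₁+⋯+αᵢ) ≤ τ̃(α_{i+1}+⋯+αₙ)`,
where `r` is the number of cuts satisfying (a); otherwise it is `0`. -/
noncomputable def Scoef {Λ T T' : Type*} [AddCommMonoid Λ] [LinearOrder T] [LinearOrder T']
    (τ : Λ → T) (τ' : Λ → T') (n : ℕ) (α : ℕ → Λ) : ℤ :=
  if ∀ i ∈ Finset.Ico 1 n,
      (τ (α (i - 1)) ≤ τ (α i) ∧
        τ' (∑ j ∈ Finset.Ico i n, α j) < τ' (∑ j ∈ Finset.range i, α j)) ∨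
      (τ (α i) < τ (α (i - 1)) ∧
        τ' (∑ j ∈ Finset.range i, α j) ≤ τ' (∑ j ∈ Finset.Ico i n, α j))
  then (-1) ^ ((Finset.Ico 1 n).filter (fun i =>
      τ (α (i - 1)) ≤ τ (α i) ∧
        τ' (∑ j ∈ Finset.Ico i n, α j) < τ' (∑ j ∈ Finset.range i, α j))).card
  else 0

/-- Given a composition `c` of `n` and a tuple `α`, the tuple of sums of `α` over
the blocks of `c`. -/
def blockSum {Λ : Type*} [AddCommMonoid Λ] {n : ℕ} (α : ℕ → Λ) (c : Composition n) :
    ℕ → Λ :=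
  fun i => ∑ r ∈ Finset.Ico (c.sizeUpTo i) (c.sizeUpTo (i + 1)), α r

open scoped Classical in
/-- The wall-crossing coefficient `U(α₁,…,αₙ; τ, τ̃)` of Joyce, for the tuple
`α 0, …, α (n-1)`: the sum over `1 ≤ l ≤ m ≤ n` and subdivisions
`0 = a₀ < ⋯ < a_m = n` (a composition `c` of `n`) and `0 = b₀ < ⋯ < b_l = m`
(a composition `d` of `m = c.length`) such that, with `βᵢ` the block sums of `α`
under `c` and `γᵢ` the block sums of `β` under `d`, one has `τ(βᵢ) = τ(αⱼ)` for
all `j` in the `i`-th block and `τ̃(γᵢ) = τ̃(α₁+⋯+αₙ)` for all `i`, of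
`((−1)^{l−1}/l) · ∏ᵢ S(β-blocks; τ, τ̃) · ∏ᵢ 1/(aᵢ − a_{i−1})!`. -/
noncomputable def Ucoef {Λ T T' : Type*} [AddCommMonoid Λ] [LinearOrder T] [LinearOrder T']
    (τ : Λ → T) (τ' : Λ → T') (n : ℕ) (α : ℕ → Λ) : ℚ :=
  ∑ c : Composition n, ∑ d : Composition c.length,
    if (∀ i < c.length, ∀ j, c.sizeUpTo i ≤ j → j < c.sizeUpTo (i + 1) →
          τ (blockSum α c i) = τ (α j)) ∧
        (∀ i < d.length,
          τ' (blockSum (blockSum α c) d i) = τ' (∑ r ∈ Finset.range n, α r))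
    then ((-1 : ℚ) ^ (d.length - 1) / (d.length : ℚ))
      * (∏ i ∈ Finset.range d.length,
          ((Scoef τ τ' (d.sizeUpTo (i + 1) - d.sizeUpTo i)
            (fun t => blockSum α c (d.sizeUpTo i + t))) : ℚ))
      * (∏ i ∈ Finset.range c.length,
          (1 : ℚ) / ((c.sizeUpTo (i + 1) - c.sizeUpTo i).factorial : ℚ))
    else 0

/-!
A nonzero term of `U` comes from subdivisions `α ↦ β ↦ γ` in which every factor `S` taken over
a block `β_0, …, β_{m-1}` of `β` is nonzero. Cut such a block after `β_i` into
`L = β_0 + ⋯ + β_i` and `R = β_{i+1} + ⋯ + β_{m-1}`. Since `μ (a + b)` lies between `μ a` and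
`μ b`, a cut with `R` below `L` and `μ β_i < μ L` forces the same at the previous cut, and one
with `μ R < μ β_{i+1}` at the next; at the ends `L = β_0` and `R = β_{m-1}` this is absurd.
When `σ` dominates `τ`, this rules out one of the two kinds of cuts allowed by a nonzero
`S(β; τ, σ)` or `S(β; σ, τ)`, and the remaining kind makes `σ (β_i)` monotone while `σ L` and
`σ R` are ordered against it, so `σ` is constant on the block. Then `σ` is constant on `γ`, and
the conditions in `U` together with dominance carry this back to `α`.
-/

open Finset

section WeakStability

variable {Λ T : Type*} [AddCommMonoid Λ] [LinearOrder T] {C : Set Λ} {μ : Λ → T}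

theorem WeakStability.dual (hμ : WeakStability C μ) :
    WeakStability C (fun x => OrderDual.toDual (μ x)) :=
  fun a ha g hg => (hμ a ha g hg).symm.imp And.symm And.symm

theorem WeakStability.map_add_le_max (hμ : WeakStability C μ) {a b : Λ} (ha : a ∈ C)
    (hb : b ∈ C) : μ (a + b) ≤ max (μ a) (μ b) := by
  rcases hμ a ha b hb with ⟨-, h⟩ | ⟨-, h⟩
  · exact h.trans (le_max_right _ _)
  · exact h.trans (le_max_left _ _)

theorem WeakStability.min_le_map_add (hμ : WeakStability C μ) {a b : Λ} (ha : a ∈ C)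
    (hb : b ∈ C) : min (μ a) (μ b) ≤ μ (a + b) :=
  hμ.dual.map_add_le_max ha hb

theorem sum_mem_of_add_mem {ι : Type*} (hC : ∀ a ∈ C, ∀ b ∈ C, a + b ∈ C) {s : Finset ι}
    (hs : s.Nonempty) {β : ι → Λ} (hβ : ∀ j ∈ s, β j ∈ C) : ∑ j ∈ s, β j ∈ C :=
  Finset.sum_induction_nonempty β (· ∈ C) (fun a b ha hb => hC a ha b hb) hs hβ

theorem WeakStability.map_sum_le {ι : Type*} (hC : ∀ a ∈ C, ∀ b ∈ C, a + b ∈ C)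
    (hμ : WeakStability C μ) {s : Finset ι} (hs : s.Nonempty) {β : ι → Λ}
    (hβ : ∀ j ∈ s, β j ∈ C) {t : T} (ht : ∀ j ∈ s, μ (β j) ≤ t) : μ (∑ j ∈ s, β j) ≤ t :=
  (Finset.sum_induction_nonempty β (fun x => x ∈ C ∧ μ x ≤ t)
    (fun _ _ ha hb => ⟨hC _ ha.1 _ hb.1, (hμ.map_add_le_max ha.1 hb.1).trans (max_le ha.2 hb.2)⟩)
    hs fun j hj => ⟨hβ j hj, ht j hj⟩).2

theorem WeakStability.le_map_sum {ι : Type*} (hC : ∀ a ∈ C, ∀ b ∈ C, a + b ∈ C)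
    (hμ : WeakStability C μ) {s : Finset ι} (hs : s.Nonempty) {β : ι → Λ}
    (hβ : ∀ j ∈ s, β j ∈ C) {t : T} (ht : ∀ j ∈ s, t ≤ μ (β j)) : t ≤ μ (∑ j ∈ s, β j) :=
  hμ.dual.map_sum_le hC hs hβ ht

theorem WeakStability.map_sum_eq {ι : Type*} (hC : ∀ a ∈ C, ∀ b ∈ C, a + b ∈ C)
    (hμ : WeakStability C μ) {s : Finset ι} (hs : s.Nonempty) {β : ι → Λ}
    (hβ : ∀ j ∈ s, β j ∈ C) {t : T} (ht : ∀ j ∈ s, μ (β j) = t) : μ (∑ j ∈ s, β j) = t :=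
  le_antisymm (hμ.map_sum_le hC hs hβ fun j hj => (ht j hj).le)
    (hμ.le_map_sum hC hs hβ fun j hj => (ht j hj).ge)

theorem sum_range_succ_mem (hC : ∀ a ∈ C, ∀ b ∈ C, a + b ∈ C) {n : ℕ} {β : ℕ → Λ}
    (hβ : ∀ j < n, β j ∈ C) {i : ℕ} (hi : i < n) : ∑ j ∈ range (i + 1), β j ∈ C :=
  sum_mem_of_add_mem hC nonempty_range_add_one fun j hj =>
    hβ j ((Nat.lt_succ_iff.1 (mem_range.1 hj)).trans_lt hi)

theorem sum_Ico_mem (hC : ∀ a ∈ C, ∀ b ∈ C, a + b ∈ C) {n : ℕ} {β : ℕ → Λ}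
    (hβ : ∀ j < n, β j ∈ C) {i : ℕ} (hi : i < n) : ∑ j ∈ Ico i n, β j ∈ C :=
  sum_mem_of_add_mem hC (nonempty_Ico.2 hi) fun j hj => hβ j (mem_Ico.1 hj).2

theorem WeakStability.eq_of_forall_cut_le (hC : ∀ a ∈ C, ∀ b ∈ C, a + b ∈ C)
    (hμ : WeakStability C μ) {n : ℕ} {β : ℕ → Λ} (hβ : ∀ j < n, β j ∈ C)
    (hcut : ∀ i, i + 1 < n → μ (β i) ≤ μ (β (i + 1)) ∧
      μ (∑ j ∈ Ico (i + 1) n, β j) ≤ μ (∑ j ∈ range (i + 1), β j)) :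
    ∀ j < n, μ (β j) = μ (β 0) := by
  have hmono : MonotoneOn (fun j => μ (β j)) (Set.Iio n) :=
    monotoneOn_of_le_succ Set.ordConnected_Iio fun i _ _ hi => by
      simpa [Order.succ_eq_add_one] using (hcut i (by simpa using hi)).1
  have hstep : ∀ i, i + 1 < n → μ (β (i + 1)) = μ (β i) := by
    intro i hi
    refine le_antisymm ?_ (hcut i hi).1
    calc μ (β (i + 1)) ≤ μ (∑ j ∈ Ico (i + 1) n, β j) :=
          hμ.le_map_sum hC (nonempty_Ico.2 hi) (fun j hj => hβ j (mem_Ico.1 hj).2)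
            fun j hj => hmono (show i + 1 < n from hi) (show j < n from (mem_Ico.1 hj).2)
              (mem_Ico.1 hj).1
      _ ≤ μ (∑ j ∈ range (i + 1), β j) := (hcut i hi).2
      _ ≤ μ (β i) :=
          hμ.map_sum_le hC nonempty_range_add_one (fun j hj => hβ j (by grind))
            fun j hj => by
              rw [mem_range, Nat.lt_add_one_iff] at hj
              exact hmono (show j < n by omega) (show i < n by omega) hj
  intro j hj
  induction j with
  | zero => rfl
  | succ j ih => exact (hstep j hj).trans (ih (by omega))

/- `r` stands for `<` or `≤`, so that both the strict and the weak comparison of the two halves of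
a cut are covered. -/
theorem WeakStability.not_lt_sum_range_of_cut (hC : ∀ a ∈ C, ∀ b ∈ C, a + b ∈ C)
    (hμ : WeakStability C μ) {n : ℕ} {β : ℕ → Λ} (hβ : ∀ j < n, β j ∈ C) {r : T → T → Prop}
    (hr_of_lt : ∀ {a b}, a < b → r a b)
    (hr_mono : ∀ {a a' b b'}, a' ≤ a → b ≤ b' → r a b → r a' b')
    (hrise : ∀ i, i + 1 < n →
      r (μ (∑ j ∈ Ico (i + 1) n, β j)) (μ (∑ j ∈ range (i + 1), β j)) → μ (β i) ≤ μ (β (i + 1)))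
    {i : ℕ} (hi : i + 1 < n)
    (hr : r (μ (∑ j ∈ Ico (i + 1) n, β j)) (μ (∑ j ∈ range (i + 1), β j))) :
    ¬ μ (β i) < μ (∑ j ∈ range (i + 1), β j) := by
  induction i with
  | zero => simp
  | succ k ih =>
    intro hlt
    have hL : μ (∑ j ∈ range (k + 2), β j) ≤ μ (∑ j ∈ range (k + 1), β j) := by
      have := hμ.map_add_le_max (sum_range_succ_mem hC hβ (i := k) (by omega))
        (hβ (k + 1) (by omega))
      rw [← sum_range_succ] at this
      exact (le_max_iff.1 this).resolve_right (not_le.2 hlt)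
    have hR : μ (∑ j ∈ Ico (k + 1) n, β j) ≤
        max (μ (β (k + 1))) (μ (∑ j ∈ Ico (k + 2) n, β j)) := by
      rw [sum_eq_sum_Ico_succ_bot (by omega)]
      exact hμ.map_add_le_max (hβ (k + 1) (by omega)) (sum_Ico_mem hC hβ hi)
    have hr' : r (μ (∑ j ∈ Ico (k + 1) n, β j)) (μ (∑ j ∈ range (k + 1), β j)) := by
      rcases le_max_iff.1 hR with h | h
      · exact hr_of_lt (h.trans_lt (hlt.trans_le hL))
      · exact hr_mono h hL hr
    exact ih (by omega) hr' ((hrise k (by omega) hr').trans_lt (hlt.trans_le hL))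

theorem WeakStability.not_sum_Ico_lt_of_cut (hC : ∀ a ∈ C, ∀ b ∈ C, a + b ∈ C)
    (hμ : WeakStability C μ) {n : ℕ} {β : ℕ → Λ} (hβ : ∀ j < n, β j ∈ C) {r : T → T → Prop}
    (hr_of_lt : ∀ {a b}, a < b → r a b)
    (hr_mono : ∀ {a a' b b'}, a' ≤ a → b ≤ b' → r a b → r a' b')
    (hrise : ∀ i, i + 1 < n →
      r (μ (∑ j ∈ Ico (i + 1) n, β j)) (μ (∑ j ∈ range (i + 1), β j)) → μ (β i) ≤ μ (β (i + 1)))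
    {i : ℕ} (hi : i + 1 < n)
    (hr : r (μ (∑ j ∈ Ico (i + 1) n, β j)) (μ (∑ j ∈ range (i + 1), β j))) :
    ¬ μ (∑ j ∈ Ico (i + 1) n, β j) < μ (β (i + 1)) := by
  obtain ⟨k, hk⟩ : ∃ k, n = i + 2 + k := ⟨n - (i + 2), by omega⟩
  induction k generalizing i with
  | zero => simp [hk]
  | succ k ih =>
    intro hlt
    have hi' : i + 2 < n := by omega
    have hR : μ (∑ j ∈ Ico (i + 2) n, β j) ≤ μ (∑ j ∈ Ico (i + 1) n, β j) := by
      have := hμ.min_le_map_add (hβ (i + 1) hi) (sum_Ico_mem hC hβ hi')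
      rw [← sum_eq_sum_Ico_succ_bot hi] at this
      exact (min_le_iff.1 this).resolve_left (not_le.2 hlt)
    have hL : min (μ (∑ j ∈ range (i + 1), β j)) (μ (β (i + 1))) ≤
        μ (∑ j ∈ range (i + 2), β j) := by
      rw [sum_range_succ _ (i + 1)]
      exact hμ.min_le_map_add (sum_range_succ_mem hC hβ (i := i) (by omega)) (hβ (i + 1) hi)
    have hr' : r (μ (∑ j ∈ Ico (i + 2) n, β j)) (μ (∑ j ∈ range (i + 2), β j)) := by
      rcases min_le_iff.1 hL with h | h
      · exact hr_mono hR h hr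
      · exact hr_of_lt ((hR.trans_lt hlt).trans_le h)
    exact ih hi' hr' (by omega) ((hR.trans_lt hlt).trans_le (hrise (i + 1) hi' hr'))

theorem WeakStability.bounds_of_cut (hC : ∀ a ∈ C, ∀ b ∈ C, a + b ∈ C)
    (hμ : WeakStability C μ) {n : ℕ} {β : ℕ → Λ} (hβ : ∀ j < n, β j ∈ C) {r : T → T → Prop}
    (hr_of_lt : ∀ {a b}, a < b → r a b)
    (hr_mono : ∀ {a a' b b'}, a' ≤ a → b ≤ b' → r a b → r a' b')
    (hrise : ∀ i, i + 1 < n →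
      r (μ (∑ j ∈ Ico (i + 1) n, β j)) (μ (∑ j ∈ range (i + 1), β j)) → μ (β i) ≤ μ (β (i + 1)))
    {i : ℕ} (hi : i + 1 < n)
    (hr : r (μ (∑ j ∈ Ico (i + 1) n, β j)) (μ (∑ j ∈ range (i + 1), β j))) :
    μ (∑ j ∈ range (i + 1), β j) ≤ μ (β i) ∧ μ (β (i + 1)) ≤ μ (∑ j ∈ Ico (i + 1) n, β j) :=
  ⟨not_lt.1 (hμ.not_lt_sum_range_of_cut hC hβ hr_of_lt hr_mono hrise hi hr),
    not_lt.1 (hμ.not_sum_Ico_lt_of_cut hC hβ hr_of_lt hr_mono hrise hi hr)⟩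

end WeakStability

section Dominance

variable {Λ T T' : Type*} [LinearOrder T] [LinearOrder T'] {C : Set Λ} {τ : Λ → T} {σ : Λ → T'}

def Dominates (C : Set Λ) (σ : Λ → T') (τ : Λ → T) : Prop :=
  ∀ a ∈ C, ∀ b ∈ C, τ a ≤ τ b → σ a ≤ σ b

theorem Dominates.eq (hdom : Dominates C σ τ) {a b : Λ} (ha : a ∈ C) (hb : b ∈ C)
    (h : τ a = τ b) : σ a = σ b :=
  le_antisymm (hdom a ha b hb h.le) (hdom b hb a ha h.ge)

theorem Dominates.lt_of_lt (hdom : Dominates C σ τ) {a b : Λ} (ha : a ∈ C) (hb : b ∈ C)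
    (h : σ a < σ b) : τ a < τ b :=
  lt_of_not_ge fun h' => (hdom b hb a ha h').not_gt h

variable [AddCommMonoid Λ]

theorem cut_of_Scoef_ne_zero {n : ℕ} {β : ℕ → Λ} (hS : Scoef τ σ n β ≠ 0) {i : ℕ} (hi : i + 1 < n) :
    (τ (β i) ≤ τ (β (i + 1)) ∧
        σ (∑ j ∈ Ico (i + 1) n, β j) < σ (∑ j ∈ range (i + 1), β j)) ∨
      (τ (β (i + 1)) < τ (β i) ∧
        σ (∑ j ∈ range (i + 1), β j) ≤ σ (∑ j ∈ Ico (i + 1) n, β j)) := by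
  by_contra hcut
  refine hS (if_neg fun hall => hcut ?_)
  simpa using hall (i + 1) (mem_Ico.2 ⟨by omega, hi⟩)

theorem Dominates.map_eq_of_Scoef_ne_zero (hdom : Dominates C σ τ)
    (hC : ∀ a ∈ C, ∀ b ∈ C, a + b ∈ C) (hσ : WeakStability C σ) {n : ℕ} {β : ℕ → Λ}
    (hβ : ∀ j < n, β j ∈ C) (hS : Scoef τ σ n β ≠ 0) : ∀ j < n, σ (β j) = σ (β 0) := by
  have hrise : ∀ i, i + 1 < n → σ (∑ j ∈ Ico (i + 1) n, β j) < σ (∑ j ∈ range (i + 1), β j) →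
      σ (β i) ≤ σ (β (i + 1)) := fun i hi hlt => by
    rcases cut_of_Scoef_ne_zero hS hi with ⟨h, -⟩ | ⟨-, h⟩
    · exact hdom _ (hβ i (by omega)) _ (hβ (i + 1) hi) h
    · exact absurd h (not_le.2 hlt)
  refine hσ.dual.eq_of_forall_cut_le hC hβ fun i hi => ?_
  have hle : σ (∑ j ∈ range (i + 1), β j) ≤ σ (∑ j ∈ Ico (i + 1) n, β j) := by
    by_contra! hlt
    obtain ⟨hL, hR⟩ := hσ.bounds_of_cut hC hβ id
      (fun h₁ h₂ h => h₁.trans_lt (h.trans_le h₂)) hrise hi hlt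
    exact (hL.trans ((hrise i hi hlt).trans hR)).not_gt hlt
  rcases cut_of_Scoef_ne_zero hS hi with ⟨-, h⟩ | ⟨h, -⟩
  · exact absurd hle (not_le.2 h)
  · exact ⟨hdom _ (hβ (i + 1) hi) _ (hβ i (by omega)) h.le, hle⟩

theorem Dominates.map_eq_of_Scoef_swap_ne_zero (hdom : Dominates C σ τ)
    (hC : ∀ a ∈ C, ∀ b ∈ C, a + b ∈ C) (hτ : WeakStability C τ) (hσ : WeakStability C σ)
    {n : ℕ} {β : ℕ → Λ} (hβ : ∀ j < n, β j ∈ C) (hS : Scoef σ τ n β ≠ 0) :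
    ∀ j < n, σ (β j) = σ (β 0) := by
  have hdrop : ∀ i, i + 1 < n → τ (∑ j ∈ range (i + 1), β j) ≤ τ (∑ j ∈ Ico (i + 1) n, β j) →
      τ (β (i + 1)) < τ (β i) := fun i hi hle => by
    rcases cut_of_Scoef_ne_zero hS hi with ⟨-, h⟩ | ⟨h, -⟩
    · exact absurd hle (not_le.2 h)
    · exact hdom.lt_of_lt (hβ (i + 1) hi) (hβ i (by omega)) h
  have hlt : ∀ i, i + 1 < n → τ (∑ j ∈ Ico (i + 1) n, β j) < τ (∑ j ∈ range (i + 1), β j) := by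
    intro i hi
    by_contra! hle
    obtain ⟨hL, hR⟩ := hτ.dual.bounds_of_cut hC hβ (r := (· ≤ ·)) le_of_lt
      (fun h₁ h₂ h => h₁.trans (h.trans h₂)) (fun i hi h => (hdrop i hi h).le) hi hle
    have hL : τ (β i) ≤ τ (∑ j ∈ range (i + 1), β j) := hL
    have hR : τ (∑ j ∈ Ico (i + 1) n, β j) ≤ τ (β (i + 1)) := hR
    exact (hR.trans_lt ((hdrop i hi hle).trans_le hL)).not_ge hle
  refine hσ.eq_of_forall_cut_le hC hβ fun i hi => ?_
  rcases cut_of_Scoef_ne_zero hS hi with ⟨h, -⟩ | ⟨-, h⟩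
  · exact ⟨h, hdom _ (sum_Ico_mem hC hβ (by omega)) _ (sum_range_succ_mem hC hβ (by omega))
      (hlt i hi).le⟩
  · exact absurd (hlt i hi) (not_lt.2 h)

theorem Composition.exists_block {n : ℕ} (c : Composition n) {j : ℕ} (hj : j < n) :
    ∃ i < c.length, c.sizeUpTo i ≤ j ∧ j < c.sizeUpTo (i + 1) :=
  ⟨c.index ⟨j, hj⟩, (c.index ⟨j, hj⟩).2, c.sizeUpTo_index_le ⟨j, hj⟩,
    by simpa using c.lt_sizeUpTo_index_succ ⟨j, hj⟩⟩

theorem Composition.eq_of_forall_block {X : Type*} {n : ℕ} (c : Composition n) {f g : ℕ → X}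
    {x : X} (hf : ∀ i < c.length, ∀ j, c.sizeUpTo i ≤ j → j < c.sizeUpTo (i + 1) → f j = g i)
    (hg : ∀ i < c.length, g i = x) : ∀ j < n, f j = x := fun j hj => by
  obtain ⟨i, hi, h₁, h₂⟩ := c.exists_block hj
  exact (hf i hi j h₁ h₂).trans (hg i hi)

theorem blockSum_mem (hC : ∀ a ∈ C, ∀ b ∈ C, a + b ∈ C) {n : ℕ} (c : Composition n)
    {α : ℕ → Λ} (hα : ∀ j < n, α j ∈ C) : ∀ i < c.length, blockSum α c i ∈ C :=
  fun _ hi => sum_mem_of_add_mem hC (nonempty_Ico.2 (c.sizeUpTo_strict_mono hi)) fun j hj =>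
    hα j ((mem_Ico.1 hj).2.trans_le (c.sizeUpTo_le _))

theorem WeakStability.map_eq_map_blockSum (hC : ∀ a ∈ C, ∀ b ∈ C, a + b ∈ C)
    {μ : Λ → T} (hμ : WeakStability C μ) {n : ℕ} (c : Composition n) {β : ℕ → Λ}
    (hβ : ∀ j < n, β j ∈ C) {i : ℕ} (hi : i < c.length)
    (h : ∀ t < c.sizeUpTo (i + 1) - c.sizeUpTo i,
      μ (β (c.sizeUpTo i + t)) = μ (β (c.sizeUpTo i + 0))) :
    ∀ j, c.sizeUpTo i ≤ j → j < c.sizeUpTo (i + 1) → μ (β j) = μ (blockSum β c i) := by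
  have hblock : ∀ j ∈ Ico (c.sizeUpTo i) (c.sizeUpTo (i + 1)), μ (β j) = μ (β (c.sizeUpTo i)) :=
    fun j hj => by
      obtain ⟨h₁, h₂⟩ := mem_Ico.1 hj
      simpa [Nat.add_sub_cancel' h₁] using h (j - c.sizeUpTo i) (by omega)
  intro j h₁ h₂
  rw [hblock j (mem_Ico.2 ⟨h₁, h₂⟩)]
  exact (hμ.map_sum_eq hC (nonempty_Ico.2 (c.sizeUpTo_strict_mono hi))
    (fun j hj => hβ j ((mem_Ico.1 hj).2.trans_le (c.sizeUpTo_le _))) hblock).symm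

theorem Ucoef_eq_zero_of_not_forall_Scoef_ne_zero {n : ℕ} {α : ℕ → Λ}
    (h : ∀ (c : Composition n) (d : Composition c.length),
      (∀ i < c.length, ∀ j, c.sizeUpTo i ≤ j → j < c.sizeUpTo (i + 1) →
        τ (blockSum α c i) = τ (α j)) →
      (∀ i < d.length, σ (blockSum (blockSum α c) d i) = σ (∑ r ∈ range n, α r)) →
      ¬ ∀ i < d.length, Scoef τ σ (d.sizeUpTo (i + 1) - d.sizeUpTo i)
        (fun t => blockSum α c (d.sizeUpTo i + t)) ≠ 0) :
    Ucoef τ σ n α = 0 := by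
  refine sum_eq_zero fun c _ => sum_eq_zero fun d _ => ?_
  split_ifs with hcond
  · obtain ⟨i, hi, hS⟩ : ∃ i < d.length, Scoef τ σ (d.sizeUpTo (i + 1) - d.sizeUpTo i)
        (fun t => blockSum α c (d.sizeUpTo i + t)) = 0 := by
      simpa using h c d hcond.1 hcond.2
    rw [prod_eq_zero (mem_range.2 hi) (by rw [hS, Int.cast_zero]), mul_zero, zero_mul]
  · rfl

theorem Dominates.Ucoef_eq_zero (hdom : Dominates C σ τ) (hC : ∀ a ∈ C, ∀ b ∈ C, a + b ∈ C)
    (hσ : WeakStability C σ) {n : ℕ} {α : ℕ → Λ} (hα : ∀ j < n, α j ∈ C)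
    (hne : ¬ ∀ i < n, σ (α i) = σ (α 0)) : Ucoef τ σ n α = 0 := by
  refine Ucoef_eq_zero_of_not_forall_Scoef_ne_zero fun c d hτc hσd hS => hne ?_
  set β := blockSum α c
  have hβ : ∀ i < c.length, β i ∈ C := blockSum_mem hC c hα
  have hαβ : ∀ i < c.length, ∀ j, c.sizeUpTo i ≤ j → j < c.sizeUpTo (i + 1) →
      σ (α j) = σ (β i) := fun i hi j h₁ h₂ =>
    (hdom.eq (hβ i hi) (hα j (h₂.trans_le (c.sizeUpTo_le _))) (hτc i hi j h₁ h₂)).symm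
  have hβγ : ∀ k < d.length, ∀ j, d.sizeUpTo k ≤ j → j < d.sizeUpTo (k + 1) →
      σ (β j) = σ (blockSum β d k) := fun k hk => hσ.map_eq_map_blockSum hC d hβ hk
    (hdom.map_eq_of_Scoef_ne_zero hC hσ
      (fun t ht => hβ _ (by have := d.sizeUpTo_le (k + 1); omega)) (hS k hk))
  have hconst := c.eq_of_forall_block hαβ (d.eq_of_forall_block hβγ hσd)
  exact fun i hi => (hconst i hi).trans (hconst 0 (by omega)).symm

theorem Dominates.Ucoef_swap_eq_zero (hdom : Dominates C σ τ)
    (hC : ∀ a ∈ C, ∀ b ∈ C, a + b ∈ C) (hτ : WeakStability C τ) (hσ : WeakStability C σ)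
    {n : ℕ} {α : ℕ → Λ} (hα : ∀ j < n, α j ∈ C) (hne : ¬ ∀ i < n, σ (α i) = σ (α 0)) :
    Ucoef σ τ n α = 0 := by
  refine Ucoef_eq_zero_of_not_forall_Scoef_ne_zero fun c d hσc hτd hS => hne ?_
  set β := blockSum α c
  have hβ : ∀ i < c.length, β i ∈ C := blockSum_mem hC c hα
  have hγ : ∀ k < d.length, blockSum β d k ∈ C := blockSum_mem hC d hβ
  have hβγ : ∀ k < d.length, ∀ j, d.sizeUpTo k ≤ j → j < d.sizeUpTo (k + 1) →
      σ (β j) = σ (blockSum β d k) := fun k hk => hσ.map_eq_map_blockSum hC d hβ hk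
    (hdom.map_eq_of_Scoef_swap_ne_zero hC hτ hσ
      (fun t ht => hβ _ (by have := d.sizeUpTo_le (k + 1); omega)) (hS k hk))
  have hγσ : ∀ k < d.length, σ (blockSum β d k) = σ (blockSum β d 0) := fun k hk =>
    hdom.eq (hγ k hk) (hγ 0 (by omega)) ((hτd k hk).trans (hτd 0 (by omega)).symm)
  have hconst := c.eq_of_forall_block (fun i hi j h₁ h₂ => (hσc i hi j h₁ h₂).symm)
    (d.eq_of_forall_block hβγ hγσ)
  exact fun i hi => (hconst i hi).trans (hconst 0 (by omega)).symm

end Dominance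

theorem Ucoef_dominates_general {Λ T T' : Type*} [AddCommMonoid Λ]
    [LinearOrder T] [LinearOrder T']
    (C : Set Λ) (hCadd : ∀ a ∈ C, ∀ b ∈ C, a + b ∈ C)
    (τ : Λ → T) (σ : Λ → T')
    (hτ : WeakStability C τ) (hσ : WeakStability C σ)
    (hdom : ∀ a ∈ C, ∀ b ∈ C, τ a ≤ τ b → σ a ≤ σ b)
    (n : ℕ) (α : ℕ → Λ) (hα : ∀ i < n, α i ∈ C)
    (hne : ¬ ∀ i < n, σ (α i) = σ (α 0)) :
    Ucoef τ σ n α = 0 ∧ Ucoef σ τ n α = 0 :=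
  ⟨Dominates.Ucoef_eq_zero hdom hCadd hσ hα hne,
    Dominates.Ucoef_swap_eq_zero hdom hCadd hτ hσ hα hne⟩

/-- Let `(τ,T,≤)` and `(τ̃,T̃,≤)` be weak stability conditions on
a positive cone `C ⊆ Λ∖{0}` such that `(τ̃,T̃,≤)` dominates `(τ,T,≤)`.  Then for
all `n ≥ 1` and `α₁,…,αₙ ∈ C`: unless `τ̃(α₁) = ⋯ = τ̃(αₙ)`, both
`U(α₁,…,αₙ; τ, τ̃) = 0` and `U(α₁,…,αₙ; τ̃, τ) = 0`. -/
theorem Ucoef_dominates {Λ T T' : Type*} [AddCommMonoid Λ]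
    [LinearOrder T] [LinearOrder T']
    (C : Set Λ) (hCadd : ∀ a ∈ C, ∀ b ∈ C, a + b ∈ C) (hC0 : (0 : Λ) ∉ C)
    (τ : Λ → T) (σ : Λ → T')
    (hτ : WeakStability C τ) (hσ : WeakStability C σ)
    (hdom : ∀ a ∈ C, ∀ b ∈ C, τ a ≤ τ b → σ a ≤ σ b)
    (n : ℕ) (hn : 1 ≤ n) (α : ℕ → Λ) (hα : ∀ i < n, α i ∈ C)
    (hne : ¬ ∀ i < n, σ (α i) = σ (α 0)) :
    Ucoef τ σ n α = 0 ∧ Ucoef σ τ n α = 0 :=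
  Ucoef_dominates_general C hCadd τ σ hτ hσ hdom n α hα hne
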